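/- arXiv:1102.3402 — 2 statements merged into one kernel-verified Lean document; each statement's English description precedes it below -/
import Mathlib

section
/- For every β ∈ ℝ, ∫_0^{L(β)} 2/(1 − βt²) dt = 𝓛(β); that is, the integral equals 2β^{−1/2} sinh^{−1}(√(e^β − 1)) for β > 0, equals 2 for β = 0, and equals 2|β|^{−1/2} sin^{−1}(√(1 − e^β)) for β < 0. -/
/-- `L(β) = ((1-e^{-β})/β)^{1/2}` for `β ≠ 0`, `L(0) = 1`. -/
noncomputable def Lb (β : ℝ) : ℝ :=
  if β = 0 then 1 else Real.sqrt ((1 - Real.exp (-β)) / β)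

/-- The limit function 𝓛(β). -/
noncomputable def calL (β : ℝ) : ℝ :=
  if 0 < β then 2 / Real.sqrt β * Real.arsinh (Real.sqrt (Real.exp β - 1))
  else if β < 0 then 2 / Real.sqrt |β| * Real.arcsin (Real.sqrt (1 - Real.exp β))
  else 2

/-!
The substitution `u = √|β| t` turns the integrand into `2 / √|β|` times `1 / (1 + u²)`
for `β < 0` and `1 / (1 - u²)` for `β > 0`, with antiderivatives `arctan` and `artanh`.
The upper limit becomes `x = √|β| L(β) = √|e^{-β} - 1|`, and the identities
`arctan x = arcsin (x / √(1 + x²))` and `artanh x = arsinh (x / √(1 - x²))` turn these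
values into the ones in `𝓛(β)`, since `1 ± x² = e^{-β}` there.
-/

open Real Set

namespace Real

theorem hasDerivAt_artanh {x : ℝ} (hx : x ∈ Ioo (-1) 1) :
    HasDerivAt artanh (1 / (1 - x ^ 2)) x := by
  have h₁ : 1 + x ≠ 0 := by grind
  have h₂ : 1 - x ≠ 0 := by grind
  have hlog : HasDerivAt (fun y => 1 / 2 * (log (1 + y) - log (1 - y))) (1 / (1 - x ^ 2)) x := by
    refine ((((hasDerivAt_id' x).const_add 1).log h₁).sub
      (((hasDerivAt_id' x).const_sub 1).log h₂)).const_mul (1 / 2) |>.congr_deriv ?_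
    rw [show 1 - x ^ 2 = (1 + x) * (1 - x) by ring]
    field_simp
    ring
  refine hlog.congr_of_eventuallyEq ?_
  filter_upwards [Ioo_mem_nhds hx.1 hx.2] with y hy
  rw [artanh_eq_half_log (Ioo_subset_Icc_self hy), log_div (by grind) (by grind)]

theorem integral_one_div_one_sub_sq {a b : ℝ} (ha : a ∈ Ioo (-1) 1) (hb : b ∈ Ioo (-1) 1) :
    ∫ x in a..b, 1 / (1 - x ^ 2) = artanh b - artanh a := by
  have hsub : uIcc a b ⊆ Ioo (-1) 1 := ordConnected_Ioo.uIcc_subset ha hb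
  refine intervalIntegral.integral_eq_sub_of_hasDerivAt
    (fun x hx => hasDerivAt_artanh (hsub hx)) (ContinuousOn.intervalIntegrable ?_)
  refine continuousOn_const.div (by fun_prop) fun x hx => ?_
  have hx' := hsub hx
  nlinarith [hx'.1, hx'.2]

theorem artanh_eq_arsinh {x : ℝ} (hx : x ∈ Ioo (-1) 1) :
    artanh x = arsinh (x / √(1 - x ^ 2)) := by
  rw [← sinh_artanh hx, arsinh_sinh]

end Real

theorem integral_two_div_one_sub_mul_sq_of_neg {β : ℝ} (hβ : β < 0) (x : ℝ) :
    ∫ t in (0 : ℝ)..x, 2 / (1 - β * t ^ 2) = 2 / √(-β) * arctan (√(-β) * x) := by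
  have hc : √(-β) ≠ 0 := (sqrt_pos.2 (neg_pos.2 hβ)).ne'
  have h : ∀ t, 2 / (1 - β * t ^ 2) = 2 * (1 / (1 + (√(-β) * t) ^ 2)) := fun t => by
    rw [mul_pow, sq_sqrt (neg_pos.2 hβ).le]; ring
  simp_rw [h, intervalIntegral.integral_const_mul, intervalIntegral.integral_comp_mul_left
    (fun u => 1 / (1 + u ^ 2)) hc, integral_one_div_one_add_sq]
  simp only [mul_zero, arctan_zero, sub_zero, smul_eq_mul]
  ring

theorem integral_two_div_one_sub_mul_sq_of_pos {β x : ℝ} (hβ : 0 < β)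
    (hx : √β * x ∈ Ioo (-1) 1) :
    ∫ t in (0 : ℝ)..x, 2 / (1 - β * t ^ 2) = 2 / √β * artanh (√β * x) := by
  have hc : √β ≠ 0 := (sqrt_pos.2 hβ).ne'
  have h : ∀ t, 2 / (1 - β * t ^ 2) = 2 * (1 / (1 - (√β * t) ^ 2)) := fun t => by
    rw [mul_pow, sq_sqrt hβ.le]; ring
  simp_rw [h, intervalIntegral.integral_const_mul, intervalIntegral.integral_comp_mul_left
    (fun u => 1 / (1 - u ^ 2)) hc]
  rw [mul_zero, integral_one_div_one_sub_sq (by norm_num) hx]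
  simp only [artanh_zero, sub_zero, smul_eq_mul]
  ring

theorem sqrt_mul_Lb {β : ℝ} (hβ : 0 < β) : √β * Lb β = √(1 - exp (-β)) := by
  rw [Lb, if_neg hβ.ne', ← sqrt_mul hβ.le, mul_div_cancel₀ _ hβ.ne']

theorem sqrt_neg_mul_Lb {β : ℝ} (hβ : β < 0) : √(-β) * Lb β = √(exp (-β) - 1) := by
  rw [Lb, if_neg hβ.ne, ← sqrt_mul (neg_nonneg.2 hβ.le), ← neg_div_neg_eq, neg_sub,
    mul_div_cancel₀ _ (neg_ne_zero.2 hβ.ne)]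

theorem sqrt_div_sqrt_exp_neg (a β : ℝ) : √a / √(exp (-β)) = √(a * exp β) := by
  rw [← sqrt_div' a (exp_pos _).le, exp_neg, div_inv_eq_mul]

theorem sqrt_one_sub_exp_neg_mem_Ioo (β : ℝ) : √(1 - exp (-β)) ∈ Ioo (-1) 1 :=
  ⟨by linarith [sqrt_nonneg (1 - exp (-β))],
    (sqrt_lt' one_pos).2 (by linarith [exp_pos (-β)])⟩

theorem artanh_sqrt_one_sub_exp_neg {β : ℝ} (hβ : 0 ≤ β) :
    artanh √(1 - exp (-β)) = arsinh √(exp β - 1) := by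
  have hle : 0 ≤ 1 - exp (-β) := by linarith [exp_le_one_iff.2 (neg_nonpos.2 hβ)]
  rw [artanh_eq_arsinh (sqrt_one_sub_exp_neg_mem_Ioo β), sq_sqrt hle, sub_sub_cancel,
    sqrt_div_sqrt_exp_neg, sub_mul, one_mul, ← exp_add, neg_add_cancel, exp_zero]

theorem arctan_sqrt_exp_neg_sub_one {β : ℝ} (hβ : β ≤ 0) :
    arctan √(exp (-β) - 1) = arcsin √(1 - exp β) := by
  have hle : 0 ≤ exp (-β) - 1 := by linarith [one_le_exp (neg_nonneg.2 hβ)]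
  rw [arctan_eq_arcsin, sq_sqrt hle, add_sub_cancel, sqrt_div_sqrt_exp_neg, sub_mul,
    one_mul, ← exp_add, neg_add_cancel, exp_zero]

/-- The integral formula: `∫_0^{L(β)} 2/(1-βt²) dt = 𝓛(β)` for every `β ∈ ℝ`. -/
theorem integral_eq_calL (β : ℝ) :
    (∫ t in (0 : ℝ)..(Lb β), 2 / (1 - β * t ^ 2)) = calL β := by
  rcases lt_trichotomy β 0 with hβ | rfl | hβ
  · rw [integral_two_div_one_sub_mul_sq_of_neg hβ, sqrt_neg_mul_Lb hβ,
      arctan_sqrt_exp_neg_sub_one hβ.le, calL, if_neg hβ.not_gt, if_pos hβ, abs_of_neg hβ]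
  · simp [Lb, calL]
  · have hx : √β * Lb β ∈ Ioo (-1) 1 := sqrt_mul_Lb hβ ▸ sqrt_one_sub_exp_neg_mem_Ioo β
    rw [integral_two_div_one_sub_mul_sq_of_pos hβ hx, sqrt_mul_Lb hβ,
      artanh_sqrt_one_sub_exp_neg hβ.le, calL, if_pos hβ]
end

section
/- For every β ∈ ℝ, both the x-marginal and the y-marginal of the measure σ_β equal the probability measure λ_β; in particular, for every x ∈ [0,L(β)], ∫_0^{L(β)} 1/(1 − βxy)² dy = L(β)/(1 − βL(β)x). -/
open MeasureTheory

/-- The probability measure `λ_β` on `ℝ`, with density `L(β)/(1-βL(β)x)` on `[0,L(β)]`. -/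
noncomputable def lambdaMeasure (β : ℝ) : Measure ℝ :=
  ((volume : Measure ℝ).restrict (Set.Icc 0 (Lb β))).withDensity
    fun x => ENNReal.ofReal (Lb β / (1 - β * Lb β * x))

/-- The measure `σ_β` on `ℝ²`, with density `(1-βxy)^{-2}` on `[0,L(β)]²`. -/
noncomputable def sigmaMeasure (β : ℝ) : Measure (ℝ × ℝ) :=
  ((volume : Measure (ℝ × ℝ)).restrict (Set.Icc (0, 0) (Lb β, Lb β))).withDensity
    fun p => ENNReal.ofReal (((1 - β * p.1 * p.2) ^ 2)⁻¹)

/-!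
Since `d/dy (y / (1 - c y)) = (1 - c y)⁻²`, integrating the density of `σ_β` in one variable over
`[0, L]` gives `L / (1 - β L x)`, the density of `λ_β`; Tonelli turns this into the statement about
marginals. The only point needing care is that `1 - β x y` does not vanish on `[0, L]²`, which
for `β > 0` follows from `β L² = 1 - e^{-β} < 1`.
-/

open Set

namespace MeasureTheory.Measure

variable {α γ : Type*} [MeasurableSpace α] [MeasurableSpace γ] {μ : Measure α} {ν : Measure γ}
  {f : α × γ → ENNReal}

lemma map_fst_withDensity_prod [SFinite μ] [SFinite ν] (hf : Measurable f) :
    ((μ.prod ν).withDensity f).map Prod.fst = μ.withDensity fun x => ∫⁻ y, f (x, y) ∂ν := by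
  ext s hs
  rw [map_apply measurable_fst hs, withDensity_apply _ (measurable_fst hs),
    withDensity_apply _ hs, ← prod_univ, ← prod_restrict, restrict_univ,
    lintegral_prod _ hf.aemeasurable]

lemma map_snd_withDensity_prod [SFinite μ] [SFinite ν] (hf : Measurable f) :
    ((μ.prod ν).withDensity f).map Prod.snd = ν.withDensity fun y => ∫⁻ x, f (x, y) ∂μ := by
  ext t ht
  rw [map_apply measurable_snd ht, withDensity_apply _ (measurable_snd ht),
    withDensity_apply _ ht, ← univ_prod, ← prod_restrict, restrict_univ,
    lintegral_prod_symm _ hf.aemeasurable]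

end MeasureTheory.Measure

lemma integral_inv_one_sub_mul_sq {c L : ℝ} (h : ∀ y ∈ uIcc 0 L, 1 - c * y ≠ 0) :
    ∫ y in (0 : ℝ)..L, ((1 - c * y) ^ 2)⁻¹ = L / (1 - c * L) := by
  have hderiv : ∀ y ∈ uIcc 0 L,
      HasDerivAt (fun y => y / (1 - c * y)) ((1 - c * y) ^ 2)⁻¹ y := by
    intro y hy
    have hden : HasDerivAt (fun y => 1 - c * y) (-c) y := by
      simpa using ((hasDerivAt_id y).const_mul c).const_sub 1
    refine ((hasDerivAt_id' y).div hden (h y hy)).congr_deriv ?_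
    field_simp [h y hy]
    ring
  have hint : IntervalIntegrable (fun y => ((1 - c * y) ^ 2)⁻¹) volume 0 L :=
    ContinuousOn.intervalIntegrable <| (by fun_prop : Continuous fun y => (1 - c * y) ^ 2)
      |>.continuousOn.inv₀ fun y hy => pow_ne_zero 2 (h y hy)
  rw [intervalIntegral.integral_eq_sub_of_hasDerivAt hderiv hint]
  simp

lemma setLIntegral_Icc_ofReal_inv_one_sub_mul_sq {c L : ℝ} (hL : 0 ≤ L)
    (h : ∀ y ∈ Icc 0 L, 0 < 1 - c * y) :
    ∫⁻ y in Icc 0 L, ENNReal.ofReal ((1 - c * y) ^ 2)⁻¹ = ENNReal.ofReal (L / (1 - c * L)) := by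
  have hne : ∀ y ∈ Icc 0 L, 1 - c * y ≠ 0 := fun y hy => (h y hy).ne'
  have hint : IntegrableOn (fun y => ((1 - c * y) ^ 2)⁻¹) (Icc 0 L) :=
    ((by fun_prop : Continuous fun y => (1 - c * y) ^ 2).continuousOn.inv₀
      fun y hy => pow_ne_zero 2 (hne y hy)).integrableOn_compact isCompact_Icc
  rw [← ofReal_integral_eq_lintegral_ofReal hint (.of_forall fun y => by positivity),
    integral_Icc_eq_integral_Ioc, ← intervalIntegral.integral_of_le hL,
    integral_inv_one_sub_mul_sq (by rwa [uIcc_of_le hL])]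

lemma Lb_nonneg (β : ℝ) : 0 ≤ Lb β := by
  unfold Lb
  split_ifs
  exacts [zero_le_one, Real.sqrt_nonneg _]

lemma mul_Lb_sq (β : ℝ) : β * Lb β ^ 2 = 1 - Real.exp (-β) := by
  rcases eq_or_ne β 0 with rfl | hβ
  · simp
  have hsign : 0 ≤ (1 - Real.exp (-β)) / β := by
    rcases hβ.lt_or_gt with hβ | hβ
    · exact div_nonneg_of_nonpos (by linarith [Real.one_le_exp_iff.2 (neg_nonneg.2 hβ.le)]) hβ.le
    · exact div_nonneg (by linarith [Real.exp_le_one_iff.2 (neg_nonpos.2 hβ.le)]) hβ.le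
  rw [Lb, if_neg hβ, Real.sq_sqrt hsign, mul_div_cancel₀ _ hβ]

lemma one_sub_mul_mul_pos {β x y : ℝ} (hx : x ∈ Icc 0 (Lb β)) (hy : y ∈ Icc 0 (Lb β)) :
    0 < 1 - β * x * y := by
  rcases le_or_gt β 0 with hβ | hβ
  · nlinarith [mul_nonneg hx.1 hy.1]
  · have hxy : x * y ≤ Lb β ^ 2 := by nlinarith [hx.1, hy.1, hx.2, hy.2]
    nlinarith [mul_Lb_sq β, Real.exp_pos (-β)]

lemma sigmaMeasure_eq_withDensity_prod (β : ℝ) :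
    sigmaMeasure β =
      ((volume.restrict (Icc 0 (Lb β))).prod (volume.restrict (Icc 0 (Lb β)))).withDensity
        fun p => ENNReal.ofReal (((1 - β * p.1 * p.2) ^ 2)⁻¹) := by
  rw [sigmaMeasure, Measure.prod_restrict, Icc_prod_Icc, Measure.volume_eq_prod]

/-- Both marginals of `σ_β` equal `λ_β`; in particular, for every `x ∈ [0,L(β)]`,
`∫_0^{L(β)} (1-βxy)^{-2} dy = L(β)/(1-βL(β)x)`. -/
theorem sigma_marginals (β : ℝ) :
    (sigmaMeasure β).map Prod.fst = lambdaMeasure β ∧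
    (sigmaMeasure β).map Prod.snd = lambdaMeasure β ∧
    ∀ x ∈ Set.Icc (0 : ℝ) (Lb β),
      (∫ y in (0 : ℝ)..(Lb β), ((1 - β * x * y) ^ 2)⁻¹) = Lb β / (1 - β * Lb β * x) := by
  have hf : Measurable fun p : ℝ × ℝ => ENNReal.ofReal (((1 - β * p.1 * p.2) ^ 2)⁻¹) := by
    fun_prop
  have hinner : ∀ x ∈ Icc 0 (Lb β),
      ∫⁻ y in Icc 0 (Lb β), ENNReal.ofReal ((1 - β * x * y) ^ 2)⁻¹ =
        ENNReal.ofReal (Lb β / (1 - β * Lb β * x)) := fun x hx => by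
    rw [setLIntegral_Icc_ofReal_inv_one_sub_mul_sq (Lb_nonneg β) fun y => one_sub_mul_mul_pos hx,
      mul_right_comm]
  refine ⟨?_, ?_, fun x hx => ?_⟩
  · rw [sigmaMeasure_eq_withDensity_prod, Measure.map_fst_withDensity_prod hf, lambdaMeasure]
    exact withDensity_congr_ae (ae_restrict_of_forall_mem measurableSet_Icc hinner)
  · rw [sigmaMeasure_eq_withDensity_prod, Measure.map_snd_withDensity_prod hf, lambdaMeasure]
    refine withDensity_congr_ae (ae_restrict_of_forall_mem measurableSet_Icc fun y hy => ?_)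
    simp only [mul_right_comm β _ y, hinner y hy]
  · rw [integral_inv_one_sub_mul_sq, mul_right_comm]
    exact fun y hy => (one_sub_mul_mul_pos hx (uIcc_of_le (Lb_nonneg β) ▸ hy)).ne'
end
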